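/- arXiv:2311.13774 — 4 statements merged into one kernel-verified Lean document; each statement's English description precedes it below -/
import Mathlib

section
/- For any g : ℝ → ℝ that is continuously differentiable with g and g' integrable against the standard Gaussian, E_{z ~ N(0,1)}[z·g(z)] = E_{z ~ N(0,1)}[g'(z)]. -/
open MeasureTheory ProbabilityTheory Real Set Filter
open scoped NNReal ENNReal

noncomputable def steinP : ℝ → ℝ := gaussianPDFReal 0 1

lemma steinP_eq : steinP = fun x => (Real.sqrt (2 * Real.pi))⁻¹ * Real.exp (-(1/2) * x ^ 2) := by
  funext x
  simp only [steinP, gaussianPDFReal, NNReal.coe_one, mul_one, sub_zero]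
  ring_nf

lemma steinP_nonneg (x : ℝ) : 0 ≤ steinP x := gaussianPDFReal_nonneg 0 1 x

lemma steinP_cont : Continuous steinP := by
  rw [steinP_eq]; continuity

lemma steinP_hasDeriv (x : ℝ) : HasDerivAt steinP (-x * steinP x) x := by
  rw [steinP_eq]
  have h : HasDerivAt (fun x : ℝ => -(1/2) * x ^ 2) (-(1/2) * (2 * x ^ 1)) x :=
    (hasDerivAt_pow 2 x).const_mul _
  have := (h.exp).const_mul (Real.sqrt (2 * Real.pi))⁻¹
  refine this.congr_deriv ?_
  ring

lemma steinP_xmul_integrable : Integrable (fun x => x * steinP x) := by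
  have h := (integrable_mul_exp_neg_mul_sq (by norm_num : (0:ℝ) < 1/2)).const_mul
    (Real.sqrt (2 * Real.pi))⁻¹
  refine h.congr ?_
  filter_upwards with x
  rw [steinP_eq]; ring_nf

lemma stein_integral_gauss (f : ℝ → ℝ) :
    ∫ x, f x ∂(gaussianReal 0 1) = ∫ x, steinP x * f x := by
  rw [gaussianReal_of_var_ne_zero 0 one_ne_zero]
  have h1 : gaussianPDF 0 1 = fun x => ((Real.toNNReal (steinP x) : ℝ≥0) : ℝ≥0∞) := by
    funext x; simp [gaussianPDF, ENNReal.ofReal, steinP]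
  have hm : Measurable fun x => Real.toNNReal (steinP x) :=
    (measurable_gaussianPDFReal 0 1).real_toNNReal
  rw [h1, integral_withDensity_eq_integral_smul hm f]
  congr 1; funext x
  simp [NNReal.smul_def, Real.coe_toNNReal _ (steinP_nonneg x)]

lemma stein_integrable_gauss {f : ℝ → ℝ} (hf : Integrable f (gaussianReal 0 1)) :
    Integrable (fun x => steinP x * f x) volume := by
  rw [gaussianReal_of_var_ne_zero 0 one_ne_zero] at hf
  have h1 : gaussianPDF 0 1 = fun x => ((Real.toNNReal (steinP x) : ℝ≥0) : ℝ≥0∞) := by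
    funext x; simp [gaussianPDF, ENNReal.ofReal, steinP]
  have hm : Measurable fun x => Real.toNNReal (steinP x) :=
    (measurable_gaussianPDFReal 0 1).real_toNNReal
  rw [h1, integrable_withDensity_iff_integrable_smul hm] at hf
  refine hf.congr ?_
  filter_upwards with x
  simp [NNReal.smul_def, Real.coe_toNNReal _ (steinP_nonneg x)]

lemma stein_key (g : ℝ → ℝ) (hg'c : Continuous (deriv g))
    (hPg' : Integrable (fun x => steinP x * deriv g x)) :
    Integrable (fun x => x * (∫ t in (0:ℝ)..x, |deriv g t|) * steinP x) := by
  set G : ℝ → ℝ := fun z => ∫ t in (0:ℝ)..z, |deriv g t| with hG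
  set w : ℝ → ℝ := fun z => z * G z * steinP z with hw
  have hGd : ∀ z, HasDerivAt G (|deriv g z|) z :=
    fun z => (hg'c.abs.integral_hasStrictDerivAt 0 z).hasDerivAt
  have hGc : Continuous G := continuous_iff_continuousAt.2 fun z => (hGd z).continuousAt
  have hwc : Continuous w := (continuous_id.mul hGc).mul steinP_cont
  have hGnn : ∀ z, 0 ≤ z → 0 ≤ G z := fun z hz =>
    intervalIntegral.integral_nonneg hz (fun t _ => abs_nonneg _)
  have hGnp : ∀ z, z ≤ 0 → G z ≤ 0 := by
    intro z hz
    rw [hG]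
    simp only
    rw [intervalIntegral.integral_symm]
    simp only [neg_nonpos]
    exact intervalIntegral.integral_nonneg hz (fun t _ => abs_nonneg _)
  have hwnn : ∀ z, 0 ≤ w z := by
    intro z
    rcases le_or_gt 0 z with hz | hz
    · exact mul_nonneg (mul_nonneg hz (hGnn z hz)) (steinP_nonneg z)
    · have h1 : 0 ≤ z * G z := by nlinarith [hGnp z hz.le]
      exact mul_nonneg h1 (steinP_nonneg z)
  have hFd : ∀ z, HasDerivAt (fun z => G z * steinP z) (|deriv g z| * steinP z - w z) z := by
    intro z
    have := (hGd z).mul (steinP_hasDeriv z)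
    refine this.congr_deriv ?_
    simp only [hw]
    ring
  have hderiv_cont : Continuous (fun z => |deriv g z| * steinP z - w z) :=
    (hg'c.abs.mul steinP_cont).sub hwc
  set C : ℝ := ∫ x, |steinP x * deriv g x| with hC
  have habs : ∀ z, |deriv g z| * steinP z = |steinP z * deriv g z| := by
    intro z
    rw [abs_mul, abs_of_nonneg (steinP_nonneg z)]
    ring
  have hbound : ∀ a b : ℝ, a ≤ b → ∫ z in a..b, |deriv g z| * steinP z ≤ C := by
    intro a b hab
    rw [intervalIntegral.integral_of_le hab]
    calc ∫ z in Ioc a b, |deriv g z| * steinP z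
        = ∫ z in Ioc a b, |steinP z * deriv g z| := by
          exact setIntegral_congr_fun measurableSet_Ioc fun z _ => habs z
      _ ≤ C := setIntegral_le_integral hPg'.abs (ae_of_all _ fun z => abs_nonneg _)
  have hftc : ∀ a b : ℝ, a ≤ b →
      ∫ z in a..b, w z = (∫ z in a..b, |deriv g z| * steinP z) - (G b * steinP b - G a * steinP a) := by
    intro a b hab
    have h1 : ∫ z in a..b, (|deriv g z| * steinP z - w z) = G b * steinP b - G a * steinP a :=
      intervalIntegral.integral_eq_sub_of_hasDerivAt (fun x _ => hFd x)
        (hderiv_cont.intervalIntegrable a b)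
    have hi1 : IntervalIntegrable (fun z => |deriv g z| * steinP z) volume a b :=
      (hg'c.abs.mul steinP_cont).intervalIntegrable a b
    have hi2 : IntervalIntegrable w volume a b := hwc.intervalIntegrable a b
    have h2 := intervalIntegral.integral_sub hi1 hi2
    rw [h2] at h1
    linarith
  have hItop : IntegrableOn w (Ioi (0:ℝ)) := by
    apply integrableOn_Ioi_of_intervalIntegral_norm_bounded C 0
      (fun i : ℝ => hwc.integrableOn_Ioc) tendsto_id
    filter_upwards [eventually_ge_atTop (0:ℝ)] with T hT
    have h0 : ∫ z in (0:ℝ)..T, ‖w z‖ = ∫ z in (0:ℝ)..T, w z := by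
      apply intervalIntegral.integral_congr
      intro z _
      exact Real.norm_of_nonneg (hwnn z)
    simp only [id] 
    rw [h0, hftc 0 T hT]
    have hG0 : G 0 = 0 := intervalIntegral.integral_same
    have hFT : 0 ≤ G T * steinP T := mul_nonneg (hGnn T hT) (steinP_nonneg T)
    have := hbound 0 T hT
    rw [hG0]
    simp only [zero_mul, sub_zero]
    linarith
  have hIbot : IntegrableOn w (Iic (0:ℝ)) := by
    apply integrableOn_Iic_of_intervalIntegral_norm_bounded C 0
      (fun i : ℝ => hwc.integrableOn_Ioc) tendsto_id
    filter_upwards [eventually_le_atBot (0:ℝ)] with T hT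
    have h0 : ∫ z in T..(0:ℝ), ‖w z‖ = ∫ z in T..(0:ℝ), w z := by
      apply intervalIntegral.integral_congr
      intro z _
      exact Real.norm_of_nonneg (hwnn z)
    simp only [id] 
    rw [h0, hftc T 0 hT]
    have hG0 : G 0 = 0 := intervalIntegral.integral_same
    have hFT : G T * steinP T ≤ 0 :=
      mul_nonpos_of_nonpos_of_nonneg (hGnp T hT) (steinP_nonneg T)
    have := hbound T 0 hT
    rw [hG0]
    simp only [zero_mul, zero_sub, sub_neg_eq_add]
    linarith
  have : IntegrableOn w (Iic 0 ∪ Ioi 0) := hIbot.union hItop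
  rwa [Iic_union_Ioi, integrableOn_univ] at this

lemma stein_zG_nonneg (g : ℝ → ℝ) (z : ℝ) : 0 ≤ z * ∫ t in (0:ℝ)..z, |deriv g t| := by
  rcases le_or_gt 0 z with hz | hz
  · exact mul_nonneg hz (intervalIntegral.integral_nonneg hz (fun t _ => abs_nonneg _))
  · have h1 : (∫ t in (0:ℝ)..z, |deriv g t|) ≤ 0 := by
      rw [intervalIntegral.integral_symm]
      simp only [neg_nonpos]
      exact intervalIntegral.integral_nonneg hz.le (fun t _ => abs_nonneg _)
    nlinarith

/-- **Stein's Lemma.** For any continuously differentiable `g : ℝ → ℝ` with `g` and `g'`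
integrable against the standard Gaussian, `E_{z ~ N(0,1)}[z * g z] = E_{z ~ N(0,1)}[g' z]`. -/
theorem stein_lemma (g : ℝ → ℝ) (hg : ContDiff ℝ 1 g)
    (hgi : Integrable g (gaussianReal 0 1))
    (hgi' : Integrable (deriv g) (gaussianReal 0 1)) :
    ∫ z, z * g z ∂(gaussianReal 0 1) = ∫ z, deriv g z ∂(gaussianReal 0 1) := by
  have hgc : Continuous g := hg.continuous
  have hg'c : Continuous (deriv g) := hg.continuous_deriv le_rfl
  have hgd : ∀ x, HasDerivAt g (deriv g x) x := fun x => (hg.differentiable one_ne_zero x).hasDerivAt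
  have hPg : Integrable (fun x => steinP x * g x) := stein_integrable_gauss hgi
  have hPg' : Integrable (fun x => steinP x * deriv g x) := stein_integrable_gauss hgi'
  set G : ℝ → ℝ := fun z => ∫ t in (0:ℝ)..z, |deriv g t| with hGdef
  have hGd : ∀ z, HasDerivAt G (|deriv g z|) z :=
    fun z => (hg'c.abs.integral_hasStrictDerivAt 0 z).hasDerivAt
  have hGc : Continuous G := continuous_iff_continuousAt.2 fun z => (hGd z).continuousAt
  have hZw : Integrable (fun x => x * G x * steinP x) := stein_key g hg'c hPg'
  have hgbound : ∀ x, |g x| ≤ |g 0| + |G x| := by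
    intro x
    have hftc : ∫ t in (0:ℝ)..x, deriv g t = g x - g 0 :=
      intervalIntegral.integral_deriv_eq_sub (fun t _ => hg.differentiable one_ne_zero t)
        (hg'c.intervalIntegrable 0 x)
    have h2 : ‖∫ t in (0:ℝ)..x, deriv g t‖ ≤ |∫ t in (0:ℝ)..x, ‖deriv g t‖| :=
      intervalIntegral.norm_integral_le_abs_integral_norm
    simp only [Real.norm_eq_abs, hftc] at h2
    calc |g x| = |g x - g 0 + g 0| := by ring_nf
      _ ≤ |g x - g 0| + |g 0| := abs_add_le _ _
      _ ≤ |G x| + |g 0| := add_le_add_left h2 _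
      _ = |g 0| + |G x| := by ring
  have hZ : Integrable (fun x => x * g x * steinP x) := by
    have hmaj : Integrable (fun x => |g 0| * |x * steinP x| + x * G x * steinP x) :=
      (steinP_xmul_integrable.abs.const_mul _).add hZw
    apply Integrable.mono' hmaj
    · exact ((continuous_id.mul hgc).mul steinP_cont).aestronglyMeasurable
    · filter_upwards with x
      have h1 : ‖x * g x * steinP x‖ = |x| * |g x| * steinP x := by
        rw [Real.norm_eq_abs, abs_mul, abs_mul, abs_of_nonneg (steinP_nonneg x)]
      have h2 : |x| * |g x| * steinP x ≤ |x| * (|g 0| + |G x|) * steinP x :=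
        mul_le_mul_of_nonneg_right (mul_le_mul_of_nonneg_left (hgbound x) (abs_nonneg x))
          (steinP_nonneg x)
      have h3 : |x| * |G x| = x * G x := by
        rw [← abs_mul]
        exact abs_of_nonneg (stein_zG_nonneg g x)
      have h4 : |x * steinP x| = |x| * steinP x := by
        rw [abs_mul, abs_of_nonneg (steinP_nonneg x)]
      rw [h1]
      calc |x| * |g x| * steinP x ≤ |x| * (|g 0| + |G x|) * steinP x := h2
        _ = |g 0| * (|x| * steinP x) + (|x| * |G x|) * steinP x := by ring
        _ = |g 0| * |x * steinP x| + x * G x * steinP x := by rw [h3, h4]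
  have hFd : ∀ x, HasDerivAt (fun x => g x * steinP x)
      (steinP x * deriv g x - x * g x * steinP x) x := by
    intro x
    have := (hgd x).mul (steinP_hasDeriv x)
    refine this.congr_deriv ?_
    ring
  have hFint : Integrable (fun x => g x * steinP x) := by
    simpa [mul_comm] using hPg
  have hF'int : Integrable (fun x => steinP x * deriv g x - x * g x * steinP x) := hPg'.sub hZ
  have h0 := integral_eq_zero_of_hasDerivAt_of_integrable hFd hF'int hFint
  rw [integral_sub hPg' hZ, sub_eq_zero] at h0
  rw [stein_integral_gauss, stein_integral_gauss]
  calc ∫ x, steinP x * (x * g x)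
      = ∫ x, x * g x * steinP x := by congr 1; funext x; ring
    _ = ∫ x, steinP x * deriv g x := h0.symm
end

section
/- For any unit vector u ∈ ℝ^d, h_k(uᵀx) = ⟨He_k(x), u^{⊗k}⟩, where He_k is the k-th Hermite tensor and h_k the k-th normalized 1D Hermite polynomial. -/
open MeasureTheory ProbabilityTheory

/-- Standard Gaussian measure on `ℝ^d`. -/
noncomputable def γd (d : ℕ) : Measure (Fin d → ℝ) := Measure.pi fun _ => gaussianReal 0 1

/-- Standard Gaussian density on `ℝ`. -/
noncomputable def gauss1 (x : ℝ) : ℝ := Real.exp (-x ^ 2 / 2) / Real.sqrt (2 * Real.pi)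

/-- The `k`-th normalized probabilist's Hermite polynomial. -/
noncomputable def h1 (k : ℕ) (x : ℝ) : ℝ :=
  ((-1 : ℝ) ^ k / Real.sqrt (Nat.factorial k)) * iteratedDeriv k gauss1 x / gauss1 x

/-- Standard Gaussian density on `ℝ^d`. -/
noncomputable def gaussD (d : ℕ) (x : Fin d → ℝ) : ℝ :=
  Real.exp (-(∑ i, x i ^ 2) / 2) / (2 * Real.pi) ^ ((d : ℝ) / 2)

/-- Iterated partial derivative along a list of coordinate directions. -/
noncomputable def pdList {d : ℕ} : List (Fin d) → ((Fin d → ℝ) → ℝ) → ((Fin d → ℝ) → ℝ)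
  | [], f => f
  | i :: l, f => fun x => fderiv ℝ (pdList l f) x (Pi.single i 1)

/-- Entry `α` of the `k`-th Hermite tensor `He_k(x)` in dimension `d`. -/
noncomputable def HeT (d k : ℕ) (x : Fin d → ℝ) (α : Fin k → Fin d) : ℝ :=
  ((-1 : ℝ) ^ k / Real.sqrt (Nat.factorial k)) * pdList (List.ofFn α) (gaussD d) x / gaussD d x

/-- The `k`-th Hermite coefficient tensor `C_k(f) = E[f(x) He_k(x)]`. -/
noncomputable def Ck (d k : ℕ) (f : (Fin d → ℝ) → ℝ) (α : Fin k → Fin d) : ℝ :=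
  ∫ x, f x * HeT d k x α ∂(γd d)

/-- Projection onto the span of degree-`k` Hermite polynomials:
`(P_k f)(x) = ⟨C_k(f), He_k(x)⟩`. -/
noncomputable def Pk (d k : ℕ) (f : (Fin d → ℝ) → ℝ) : (Fin d → ℝ) → ℝ :=
  fun x => ∑ α : Fin k → Fin d, Ck d k f α * HeT d k x α

set_option maxHeartbeats 1000000

lemma contDiff_gaussD (d : ℕ) : ContDiff ℝ (⊤:ℕ∞) (gaussD d) := by
  have h : ContDiff ℝ (⊤:ℕ∞) fun x : Fin d → ℝ => ∑ i, x i ^ 2 :=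
    ContDiff.sum fun i _ => ((ContinuousLinearMap.proj (R := ℝ) (φ := fun _ : Fin d => ℝ) i).contDiff).pow 2
  exact (Real.contDiff_exp.comp (h.neg.div_const 2)).div_const _

noncomputable def dirD {d : ℕ} (u : Fin d → ℝ) : ℕ → ((Fin d → ℝ) → ℝ) → ((Fin d → ℝ) → ℝ)
  | 0, f => f
  | k+1, f => fun x => fderiv ℝ (dirD u k f) x u

lemma contDiff_pdList {d : ℕ} (l : List (Fin d)) (f : (Fin d → ℝ) → ℝ)
    (hf : ContDiff ℝ (⊤:ℕ∞) f) : ContDiff ℝ (⊤:ℕ∞) (pdList l f) := by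
  induction l with
  | nil => exact hf
  | cons i l ih =>
    show ContDiff ℝ (⊤:ℕ∞) fun x => fderiv ℝ (pdList l f) x (Pi.single i 1)
    exact (ih.fderiv_right (by exact_mod_cast le_top)).clm_apply contDiff_const

lemma clm_sum_single {d : ℕ} (u : Fin d → ℝ) (T : (Fin d → ℝ) →L[ℝ] ℝ) :
    ∑ i, u i * T (Pi.single i 1) = T u := by
  have hu : u = ∑ i, u i • (Pi.single i (1:ℝ) : Fin d → ℝ) := by
    funext j
    simp [Finset.sum_apply, Pi.single_apply]
  conv_rhs => rw [hu]
  rw [map_sum]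
  simp [smul_eq_mul]

lemma sum_pd_eq_dirD {d : ℕ} (u : Fin d → ℝ) (f : (Fin d → ℝ) → ℝ)
    (hf : ContDiff ℝ (⊤:ℕ∞) f) :
    ∀ k x, ∑ α : Fin k → Fin d, (∏ j, u (α j)) * pdList (List.ofFn α) f x = dirD u k f x := by
  intro k
  induction k with
  | zero =>
    intro x
    simp [dirD, pdList, List.ofFn_zero]
  | succ k ih =>
    intro x
    have hfeq : (fun y => ∑ α : Fin k → Fin d, (∏ j, u (α j)) * pdList (List.ofFn α) f y)
        = dirD u k f := funext ih
    have hdiff : ∀ (α : Fin k → Fin d), DifferentiableAt ℝ (pdList (List.ofFn α) f) x :=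
      fun α => ((contDiff_pdList _ f hf).differentiable (by simp)).differentiableAt
    have step1 : ∑ α : Fin (k+1) → Fin d, (∏ j, u (α j)) * pdList (List.ofFn α) f x
        = ∑ p : Fin d × (Fin k → Fin d),
            (u p.1 * ∏ j, u (p.2 j)) * fderiv ℝ (pdList (List.ofFn p.2) f) x (Pi.single p.1 1) := by
      refine (Fintype.sum_equiv (Fin.consEquiv fun _ => Fin d)
        (fun p => (u p.1 * ∏ j, u (p.2 j)) * fderiv ℝ (pdList (List.ofFn p.2) f) x (Pi.single p.1 1))
        (fun α => (∏ j, u (α j)) * pdList (List.ofFn α) f x) (fun p => ?_)).symm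
      simp only [Fin.consEquiv_apply, Fin.prod_univ_succ, Fin.cons_zero, Fin.cons_succ,
        List.ofFn_succ, pdList]
    rw [step1, Fintype.sum_prod_type]
    have step2 : ∀ i : Fin d, ∀ α : Fin k → Fin d,
        (u i * ∏ j, u (α j)) * fderiv ℝ (pdList (List.ofFn α) f) x (Pi.single i 1)
        = (∏ j, u (α j)) * (u i * fderiv ℝ (pdList (List.ofFn α) f) x (Pi.single i 1)) := by
      intro i α; ring
    calc ∑ i : Fin d, ∑ α : Fin k → Fin d,
            (u i * ∏ j, u (α j)) * fderiv ℝ (pdList (List.ofFn α) f) x (Pi.single i 1)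
        = ∑ α : Fin k → Fin d, (∏ j, u (α j)) *
            ∑ i, u i * fderiv ℝ (pdList (List.ofFn α) f) x (Pi.single i 1) := by
          rw [Finset.sum_comm]
          exact Finset.sum_congr rfl fun α _ => by rw [Finset.mul_sum]; exact Finset.sum_congr rfl fun i _ => step2 i α
      _ = ∑ α : Fin k → Fin d, (∏ j, u (α j)) * fderiv ℝ (pdList (List.ofFn α) f) x u := by
          exact Finset.sum_congr rfl fun α _ => by rw [clm_sum_single]
      _ = fderiv ℝ (fun y => ∑ α : Fin k → Fin d, (∏ j, u (α j)) * pdList (List.ofFn α) f y) x u := by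
          rw [fderiv_fun_sum fun α _ => (hdiff α).const_mul _, ContinuousLinearMap.sum_apply]
          exact Finset.sum_congr rfl fun α _ => by
            rw [fderiv_const_mul (hdiff α), ContinuousLinearMap.smul_apply, smul_eq_mul]
      _ = dirD u (k+1) f x := by rw [hfeq]; rfl

lemma contDiff_gauss1 : ContDiff ℝ (⊤:ℕ∞) gauss1 :=
  (Real.contDiff_exp.comp (((contDiff_id.pow 2).neg).div_const 2)).div_const _

noncomputable def rAux (d : ℕ) (u x : Fin d → ℝ) : ℝ :=
  ((2 * Real.pi) ^ (((d:ℝ) - 1) / 2))⁻¹ *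
    Real.exp (2⁻¹ * ((∑ i, u i * x i) ^ 2 - ∑ i, x i ^ 2))

noncomputable def Tlin {d : ℕ} (u : Fin d → ℝ) : (Fin d → ℝ) →L[ℝ] ℝ :=
  ∑ i, u i • ContinuousLinearMap.proj i

lemma Tlin_apply {d : ℕ} (u y : Fin d → ℝ) : Tlin u y = ∑ i, u i * y i := by
  simp [Tlin, ContinuousLinearMap.sum_apply, smul_eq_mul]

lemma Tlin_self {d : ℕ} (u : Fin d → ℝ) (hu : ∑ i, u i ^ 2 = 1) : Tlin u u = 1 := by
  rw [Tlin_apply, ← hu]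
  exact Finset.sum_congr rfl fun i _ => (pow_two (u i)).symm

lemma hasFDerivAt_t {d : ℕ} (u x : Fin d → ℝ) :
    HasFDerivAt (fun y : Fin d → ℝ => ∑ i, u i * y i) (Tlin u) x := by
  have h : (fun y : Fin d → ℝ => ∑ i, u i * y i) = Tlin u := funext fun y => (Tlin_apply u y).symm
  rw [h]; exact (Tlin u).hasFDerivAt

lemma hasFDerivAt_q {d : ℕ} (x : Fin d → ℝ) :
    HasFDerivAt (fun y : Fin d → ℝ => ∑ i, y i ^ 2)
      (∑ i, (2 * x i) • ContinuousLinearMap.proj (R := ℝ) (φ := fun _ : Fin d => ℝ) i) x := by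
  refine HasFDerivAt.fun_sum fun i _ => ?_
  have hp := (ContinuousLinearMap.proj (R := ℝ) (φ := fun _ : Fin d => ℝ) i).hasFDerivAt (x := x)
  simpa [pow_two, two_mul, add_smul, ContinuousLinearMap.proj_apply] using hp.fun_mul hp

lemma hasFDerivAt_t2 {d : ℕ} (u x : Fin d → ℝ) :
    HasFDerivAt (fun y : Fin d → ℝ => (∑ i, u i * y i) ^ 2)
      ((2 * ∑ i, u i * x i) • Tlin u) x := by
  simpa [pow_two, two_mul, add_smul] using (hasFDerivAt_t u x).fun_mul (hasFDerivAt_t u x)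

lemma hasFDerivAt_rAux {d : ℕ} (u x : Fin d → ℝ) :
    ∃ R : (Fin d → ℝ) →L[ℝ] ℝ, HasFDerivAt (rAux d u) R x ∧
      ((∑ i, u i ^ 2 = 1) → R u = 0) := by
  set Ψ : (Fin d → ℝ) →L[ℝ] ℝ :=
    (2:ℝ)⁻¹ • ((2 * ∑ i, u i * x i) • Tlin u - ∑ i, (2 * x i) • ContinuousLinearMap.proj i) with hΨ
  have hψ : HasFDerivAt (fun y : Fin d → ℝ => 2⁻¹ * ((∑ i, u i * y i) ^ 2 - ∑ i, y i ^ 2)) Ψ x :=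
    ((hasFDerivAt_t2 u x).sub (hasFDerivAt_q x)).const_mul _
  have hexp := (Real.hasDerivAt_exp _).comp_hasFDerivAt x hψ
  refine ⟨_, hexp.const_mul (((2 * Real.pi) ^ (((d:ℝ) - 1) / 2))⁻¹), fun hu => ?_⟩
  have hΨu : Ψ u = 0 := by
    rw [hΨ]
    simp only [ContinuousLinearMap.smul_apply, ContinuousLinearMap.sub_apply,
      ContinuousLinearMap.sum_apply, ContinuousLinearMap.proj_apply, Tlin_self u hu, smul_eq_mul]
    have : ∑ i, (2 * x i) * u i = 2 * ∑ i, u i * x i := by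
      rw [Finset.mul_sum]
      exact Finset.sum_congr rfl fun i _ => by ring
    rw [this]
    ring
  simp [hΨu]

lemma gaussD_eq (d : ℕ) (u x : Fin d → ℝ) :
    gaussD d x = gauss1 (∑ i, u i * x i) * rAux d u x := by
  have hC : Real.sqrt (2 * Real.pi) * (2 * Real.pi) ^ (((d:ℝ) - 1) / 2)
      = (2 * Real.pi) ^ ((d:ℝ) / 2) := by
    rw [Real.sqrt_eq_rpow, ← Real.rpow_add (by positivity)]
    ring_nf
  have h1 : Real.exp (-(∑ i, u i * x i) ^ 2 / 2) *
      Real.exp (2⁻¹ * ((∑ i, u i * x i) ^ 2 - ∑ i, x i ^ 2))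
      = Real.exp (-(∑ i, x i ^ 2) / 2) := by
    rw [← Real.exp_add]; ring_nf
  unfold gaussD gauss1 rAux
  rw [← hC, ← h1]
  have hs : Real.sqrt (2 * Real.pi) ≠ 0 := by positivity
  have hc : ((2 * Real.pi) ^ (((d:ℝ) - 1) / 2) : ℝ) ≠ 0 := by positivity
  field_simp

lemma dirD_gaussD (d : ℕ) (u : Fin d → ℝ) (hu : ∑ i, u i ^ 2 = 1) :
    ∀ k x, dirD u k (gaussD d) x = iteratedDeriv k gauss1 (∑ i, u i * x i) * rAux d u x := by
  intro k
  induction k with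
  | zero =>
    intro x
    rw [iteratedDeriv_zero]
    exact gaussD_eq d u x
  | succ k ih =>
    intro x
    have hfeq : dirD u k (gaussD d)
        = fun y => iteratedDeriv k gauss1 (∑ i, u i * y i) * rAux d u y := funext ih
    have hsm : ContDiff ℝ (⊤:ℕ∞) (iteratedDeriv k gauss1) := by
      rw [iteratedDeriv_eq_iterate]
      exact contDiff_gauss1.iterate_deriv k
    have hφ : HasDerivAt (iteratedDeriv k gauss1)
        (iteratedDeriv (k+1) gauss1 (∑ i, u i * x i)) (∑ i, u i * x i) := by
      rw [iteratedDeriv_succ]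
      exact ((hsm.differentiable (by simp)).differentiableAt).hasDerivAt
    obtain ⟨R, hR, hRu⟩ := hasFDerivAt_rAux u x
    have hcomp : HasFDerivAt (fun y : Fin d → ℝ => iteratedDeriv k gauss1 (∑ i, u i * y i))
        (iteratedDeriv (k+1) gauss1 (∑ i, u i * x i) • Tlin u) x :=
      (hφ.comp_hasFDerivAt x (hasFDerivAt_t u x) :)
    have hmul : HasFDerivAt
        (fun y => iteratedDeriv k gauss1 (∑ i, u i * y i) * rAux d u y)
        (iteratedDeriv k gauss1 (∑ i, u i * x i) • R +
          rAux d u x • (iteratedDeriv (k+1) gauss1 (∑ i, u i * x i) • Tlin u)) x :=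
      hcomp.mul hR
    show fderiv ℝ (dirD u k (gaussD d)) x u = _
    rw [hfeq, hmul.fderiv]
    simp only [ContinuousLinearMap.add_apply, ContinuousLinearMap.smul_apply, smul_eq_mul,
      hRu hu, Tlin_self u hu]
    ring

/-- For any unit vector `u ∈ ℝ^d`, `h_k(uᵀx) = ⟨He_k(x), u^{⊗k}⟩`. -/
theorem hermite_poly_eq_tensor_pairing (d k : ℕ) (u : Fin d → ℝ)
    (hu : ∑ i, u i ^ 2 = 1) (x : Fin d → ℝ) :
    h1 k (∑ i, u i * x i)
      = ∑ α : Fin k → Fin d, HeT d k x α * ∏ j, u (α j) := by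
  have key := sum_pd_eq_dirD u (gaussD d) (contDiff_gaussD d) k x
  have hdd := dirD_gaussD d u hu k x
  have hr : rAux d u x ≠ 0 := by unfold rAux; positivity
  have hg1 : gauss1 (∑ i, u i * x i) ≠ 0 := by unfold gauss1; positivity
  have hfac : (0:ℝ) < Real.sqrt (Nat.factorial k) :=
    Real.sqrt_pos.mpr (by exact_mod_cast Nat.factorial_pos k)
  have hG : gaussD d x = gauss1 (∑ i, u i * x i) * rAux d u x := gaussD_eq d u x
  have hRHS : ∑ α : Fin k → Fin d, HeT d k x α * ∏ j, u (α j)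
      = ((-1:ℝ) ^ k / Real.sqrt (Nat.factorial k)) * dirD u k (gaussD d) x / gaussD d x := by
    rw [← key, Finset.mul_sum, Finset.sum_div]
    refine Finset.sum_congr rfl fun α _ => ?_
    unfold HeT
    ring
  rw [hRHS, hdd, hG]
  unfold h1
  field_simp
end

section
/- For x ~ N(0, I_d), the d^k × d^k matrix E[Vec(x^{⊗k}) Vec(x^{⊗k})ᵀ] satisfies E[Vec(x^{⊗k}) Vec(x^{⊗k})ᵀ] ⪰ k!·Π, where Π is the orthogonal projection onto the subspace of (vectorized) symmetric k-tensors. -/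
open MeasureTheory ProbabilityTheory

/-- The second-moment matrix of vectorized Gaussian `k`-tensors. -/
noncomputable def gaussTensorMoment (d k : ℕ) : Matrix (Fin k → Fin d) (Fin k → Fin d) ℝ :=
  fun α β => ∫ x, (∏ j, x (α j)) * (∏ j, x (β j)) ∂(γd d)

/-- The orthogonal projection matrix onto (vectorized) symmetric `k`-tensors:
its `(α, β)` entry is `#{π : α ∘ π = β} / k!`. -/
noncomputable def symProj (d k : ℕ) : Matrix (Fin k → Fin d) (Fin k → Fin d) ℝ :=
  fun α β =>
    ((Finset.univ.filter fun π : Equiv.Perm (Fin k) => α ∘ π = β).card : ℝ) / Nat.factorial k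


namespace GaussAux
open Polynomial Real Filter
open scoped ENNReal NNReal
noncomputable section


lemma pow_le_gauss (n : ℕ) (x : ℝ) :
    |x| ^ n * rexp (-x ^ 2 / 2) ≤ (1 + 4 ^ n * n.factorial) * rexp (-x ^ 2 / 4) := by
  have h1 : |x| ^ n ≤ 1 + (x ^ 2) ^ n := by
    rcases le_total (|x|) 1 with h | h
    · have := pow_le_one₀ (abs_nonneg x) h (n := n)
      nlinarith [pow_nonneg (sq_nonneg x) n]
    · have : |x| ^ n ≤ (|x| ^ 2) ^ n := by
        rw [← pow_mul]
        exact pow_le_pow_right₀ h (by omega)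
      rw [sq_abs] at this
      linarith
  have h2 : (x ^ 2 / 4) ^ n / n.factorial ≤ rexp (x ^ 2 / 4) :=
    Real.pow_div_factorial_le_exp (x := x^2/4) (by positivity) n
  have h3 : (x ^ 2) ^ n ≤ 4 ^ n * n.factorial * rexp (x ^ 2 / 4) := by
    have hn : (0:ℝ) < n.factorial := by positivity
    rw [div_le_iff₀ hn] at h2
    have : (x ^ 2 / 4) ^ n = (x^2)^n / 4 ^ n := by rw [div_pow]
    rw [this] at h2
    have h4 : (0:ℝ) < 4 ^ n := by positivity
    calc (x^2)^n = ((x^2)^n / 4^n) * 4^n := by field_simp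
    _ ≤ (rexp (x^2/4) * n.factorial) * 4 ^ n := by
        apply mul_le_mul_of_nonneg_right h2 h4.le
    _ = 4 ^ n * n.factorial * rexp (x^2/4) := by ring
  have he : rexp (-x^2/2) ≤ rexp (-x^2/4) := by
    apply Real.exp_le_exp.2; nlinarith [sq_nonneg x]
  have hepos : 0 < rexp (-x^2/2) := Real.exp_pos _
  calc |x| ^ n * rexp (-x ^ 2 / 2)
      ≤ (1 + (x^2)^n) * rexp (-x^2/2) := by
        apply mul_le_mul_of_nonneg_right h1 hepos.le
    _ ≤ rexp (-x^2/2) + 4 ^ n * n.factorial * rexp (x^2/4) * rexp (-x^2/2) := by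
        nlinarith [mul_le_mul_of_nonneg_right h3 hepos.le]
    _ ≤ rexp (-x^2/4) + 4 ^ n * n.factorial * rexp (-x^2/4) := by
        have : rexp (x^2/4) * rexp (-x^2/2) = rexp (-x^2/4) := by
          rw [← Real.exp_add]; ring_nf
        rw [mul_assoc, this]; linarith
    _ = (1 + 4 ^ n * n.factorial) * rexp (-x ^ 2 / 4) := by ring

lemma integrable_pow_gauss (n : ℕ) :
    Integrable (fun x : ℝ => x ^ n * rexp (-x ^ 2 / 2)) := by
  apply Integrable.mono' ((integrable_exp_neg_mul_sq (by norm_num : (0:ℝ) < 1/4)).const_mul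
    (1 + 4 ^ n * n.factorial))
  · exact ((continuous_pow n).mul (by continuity)).aestronglyMeasurable
  · filter_upwards with x
    rw [norm_mul, norm_pow]
    have := pow_le_gauss n x
    calc ‖x‖ ^ n * ‖rexp (-x^2/2)‖ = |x|^n * rexp (-x^2/2) := by
          rw [Real.norm_eq_abs, Real.norm_eq_abs, abs_of_pos (Real.exp_pos _)]
      _ ≤ (1 + 4 ^ n * n.factorial) * rexp (-x ^ 2 / 4) := this
      _ = (1 + 4 ^ n * n.factorial) * rexp (-(1/4) * x ^ 2) := by ring_nf

lemma tendsto_pow_gauss (n : ℕ) {l : Filter ℝ}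
    (hl : Tendsto (fun x : ℝ => x ^ 2) l atTop) :
    Tendsto (fun x : ℝ => x ^ n * rexp (-x ^ 2 / 2)) l (nhds 0) := by
  have hg : Tendsto (fun x : ℝ => (1 + 4 ^ n * (n.factorial:ℝ)) * rexp (-x ^ 2 / 4)) l (nhds 0) := by
    rw [show (0:ℝ) = (1 + 4 ^ n * (n.factorial:ℝ)) * 0 by ring]
    apply Tendsto.const_mul
    apply Real.tendsto_exp_atBot.comp
    apply Tendsto.atBot_div_const (by norm_num)
    exact tendsto_neg_atBot_iff.mpr hl
  apply squeeze_zero_norm _ hg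
  intro x
  rw [norm_mul, norm_pow]
  calc ‖x‖ ^ n * ‖rexp (-x^2/2)‖ = |x|^n * rexp (-x^2/2) := by
        rw [Real.norm_eq_abs, Real.norm_eq_abs, abs_of_pos (Real.exp_pos _)]
    _ ≤ (1 + 4 ^ n * n.factorial) * rexp (-x ^ 2 / 4) := pow_le_gauss n x

lemma tendsto_poly_gauss (p : ℝ[X]) {l : Filter ℝ}
    (hl : Tendsto (fun x : ℝ => x ^ 2) l atTop) :
    Tendsto (fun x : ℝ => p.eval x * rexp (-x ^ 2 / 2)) l (nhds 0) := by
  have : (fun x : ℝ => p.eval x * rexp (-x ^ 2 / 2)) =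
      fun x => ∑ i ∈ Finset.range (p.natDegree + 1), p.coeff i * (x ^ i * rexp (-x^2/2)) := by
    funext x
    rw [Polynomial.eval_eq_sum_range, Finset.sum_mul]
    exact Finset.sum_congr rfl fun i _ => by ring
  rw [this]
  rw [show (0:ℝ) = ∑ i ∈ Finset.range (p.natDegree + 1), p.coeff i * 0 by simp]
  exact tendsto_finset_sum _ fun i _ => (tendsto_pow_gauss i hl).const_mul _

lemma integrable_poly_gauss (p : ℝ[X]) :
    Integrable (fun x : ℝ => p.eval x * rexp (-x ^ 2 / 2)) := by
  have : (fun x : ℝ => p.eval x * rexp (-x ^ 2 / 2)) =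
      fun x => ∑ i ∈ Finset.range (p.natDegree + 1), p.coeff i * (x ^ i * rexp (-x^2/2)) := by
    funext x
    rw [Polynomial.eval_eq_sum_range, Finset.sum_mul]
    exact Finset.sum_congr rfl fun i _ => by ring
  rw [this]
  exact integrable_finset_sum _ fun i _ => (integrable_pow_gauss i).const_mul _


def γ1 : Measure ℝ := gaussianReal 0 1

instance : IsProbabilityMeasure γ1 := by unfold γ1; infer_instance

lemma pdf_eq (x : ℝ) : gaussianPDFReal 0 1 x = (√(2*π))⁻¹ * rexp (-x^2/2) := by
  simp [gaussianPDFReal]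

lemma integral_γ1 (f : ℝ → ℝ) :
    ∫ x, f x ∂γ1 = ∫ x, gaussianPDFReal 0 1 x * f x := by
  rw [γ1, gaussianReal_of_var_ne_zero 0 one_ne_zero]
  have h : (gaussianPDF 0 1) = fun x => ((gaussianPDFReal 0 1 x).toNNReal : ℝ≥0∞) := rfl
  rw [h, integral_withDensity_eq_integral_smul
    ((measurable_gaussianPDFReal 0 1).real_toNNReal) f]
  congr 1; funext x
  simp [NNReal.smul_def, Real.coe_toNNReal _ (gaussianPDFReal_nonneg 0 1 x)]

lemma integrable_γ1_poly (p : ℝ[X]) : Integrable (fun x => p.eval x) γ1 := by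
  rw [γ1, gaussianReal_of_var_ne_zero 0 one_ne_zero]
  rw [integrable_withDensity_iff (measurable_gaussianPDF 0 1)
    (ae_of_all _ fun x => ENNReal.ofReal_lt_top)]
  have : (fun x => p.eval x * (gaussianPDF 0 1 x).toReal)
      = fun x => (√(2*π))⁻¹ * (p.eval x * rexp (-x^2/2)) := by
    funext x
    rw [gaussianPDF, ENNReal.toReal_ofReal (gaussianPDFReal_nonneg 0 1 x), pdf_eq]
    ring
  rw [this]
  exact (integrable_poly_gauss p).const_mul _

lemma integral_gauss_deriv_eq_zero (p : ℝ[X]) :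
    ∫ x : ℝ, ((derivative p).eval x - x * p.eval x) * rexp (-x^2/2) = 0 := by
  set ψ : ℝ → ℝ := fun x => p.eval x * rexp (-x^2/2) with hψ
  set ψ' : ℝ → ℝ := fun x => ((derivative p).eval x - x * p.eval x) * rexp (-x^2/2) with hψ'
  have hasD : ∀ x : ℝ, HasDerivAt ψ (ψ' x) x := by
    intro x
    have h1 : HasDerivAt (fun x : ℝ => p.eval x) ((derivative p).eval x) x :=
      p.hasDerivAt x
    have h2 : HasDerivAt (fun x : ℝ => rexp (-x^2/2)) (rexp (-x^2/2) * (-x)) x := by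
      have hin : HasDerivAt (fun x : ℝ => -x^2/2) (-x) x := by
        have := (hasDerivAt_pow 2 x).neg.div_const 2
        refine this.congr_deriv ?_
        ring
      exact (Real.hasDerivAt_exp (-x^2/2)).comp x hin
    have := h1.mul h2
    refine this.congr_deriv ?_
    simp only [hψ']
    ring
  have hint : Integrable ψ' := by
    have : ψ' = fun x => (derivative p - X * p).eval x * rexp (-x^2/2) := by
      funext x; simp [ψ']
    rw [this]
    exact integrable_poly_gauss _
  have htop : Tendsto ψ atTop (nhds 0) :=
    tendsto_poly_gauss p (tendsto_pow_atTop two_ne_zero)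
  have hbot : Tendsto ψ atBot (nhds 0) := by
    apply tendsto_poly_gauss p
    have h := (tendsto_pow_atTop (n := 2) two_ne_zero).comp
      (tendsto_neg_atBot_atTop (G := ℝ))
    simpa [Function.comp_def, neg_sq] using h
  have hIoi : ∫ x in Set.Ioi (0:ℝ), ψ' x = 0 - ψ 0 :=
    integral_Ioi_of_hasDerivAt_of_tendsto (hasD 0).continuousAt.continuousWithinAt
      (fun x _ => hasD x) hint.integrableOn htop
  have hIic : ∫ x in Set.Iic (0:ℝ), ψ' x = ψ 0 - 0 :=
    integral_Iic_of_hasDerivAt_of_tendsto (hasD 0).continuousAt.continuousWithinAt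
      (fun x _ => hasD x) hint.integrableOn hbot
  have hsplit := intervalIntegral.integral_Iic_add_Ioi (b := (0:ℝ)) (f := ψ')
    hint.integrableOn hint.integrableOn
  rw [hIoi, hIic] at hsplit
  calc (∫ x : ℝ, ψ' x) = ψ 0 - 0 + (0 - ψ 0) := hsplit.symm
    _ = 0 := by ring

lemma stein (p : ℝ[X]) :
    ∫ x, (derivative p).eval x ∂γ1 = ∫ x, x * p.eval x ∂γ1 := by
  have h1 : ∫ x, ((derivative p).eval x - x * p.eval x) ∂γ1 = 0 := by
    rw [integral_γ1]
    have : (fun x => gaussianPDFReal 0 1 x * ((derivative p).eval x - x * p.eval x))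
        = fun x => (√(2*π))⁻¹ * (((derivative p).eval x - x * p.eval x) * rexp (-x^2/2)) := by
      funext x; rw [pdf_eq]; ring
    rw [this, integral_const_mul, integral_gauss_deriv_eq_zero, mul_zero]
  have h2 : Integrable (fun x => (derivative p).eval x) γ1 := integrable_γ1_poly _
  have h3 : Integrable (fun x => x * p.eval x) γ1 := by
    have := integrable_γ1_poly (X * p)
    simpa using this
  rw [integral_sub h2 h3] at h1
  linarith

def Hp (n : ℕ) : ℝ[X] := (hermite n).map (Int.castRingHom ℝ)

lemma Hp_succ (n : ℕ) : Hp (n + 1) = X * Hp n - derivative (Hp n) := by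
  unfold Hp
  rw [hermite_succ]
  simp [Polynomial.derivative_map]

lemma Hp_zero : Hp 0 = 1 := by unfold Hp; simp [hermite_zero]

lemma natDegree_Hp (n : ℕ) : (Hp n).natDegree = n := by
  unfold Hp
  rw [natDegree_map_eq_of_injective (fun a b h => by simpa using h)]
  exact natDegree_hermite

lemma coeff_Hp_self (n : ℕ) : (Hp n).coeff n = 1 := by
  unfold Hp; rw [coeff_map]; simp [coeff_hermite_self]

def I (p : ℝ[X]) : ℝ := ∫ x, p.eval x ∂γ1

lemma I_add (p q : ℝ[X]) : I (p + q) = I p + I q := by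
  unfold I
  simp only [eval_add]
  exact integral_add (integrable_γ1_poly p) (integrable_γ1_poly q)

lemma I_sub (p q : ℝ[X]) : I (p - q) = I p - I q := by
  unfold I
  simp only [eval_sub]
  exact integral_sub (integrable_γ1_poly p) (integrable_γ1_poly q)

lemma I_smul (c : ℝ) (p : ℝ[X]) : I (C c * p) = c * I p := by
  unfold I
  simp only [eval_mul, eval_C]
  exact integral_const_mul c _

lemma I_one : I 1 = 1 := by
  unfold I; simp

lemma I_stein (p : ℝ[X]) : I (derivative p) = I (X * p) := by
  unfold I
  simp only [eval_mul, eval_X]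
  exact stein p

def T (a b : ℕ) : ℝ := I (X ^ a * Hp b)

lemma T_zero_succ (b : ℕ) : T 0 (b + 1) = 0 := by
  unfold T
  rw [pow_zero, one_mul, Hp_succ, I_sub, I_stein]
  ring

lemma T_succ_succ (a b : ℕ) : T (a + 1) (b + 1) = (a + 1) * T a b := by
  have hder : derivative (X ^ (a + 1) * Hp b)
      = C ((a:ℝ) + 1) * (X ^ a * Hp b) + X ^ (a + 1) * derivative (Hp b) := by
    rw [derivative_mul, derivative_X_pow]
    push_cast
    ring
  have hstein := I_stein (X ^ (a + 1) * Hp b)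
  rw [hder, I_add, I_smul] at hstein
  have hX : X * (X ^ (a + 1) * Hp b) = X ^ (a + 2) * Hp b := by ring
  rw [hX] at hstein
  unfold T
  rw [Hp_succ, mul_sub, I_sub]
  have hX2 : X ^ (a + 1) * (X * Hp b) = X ^ (a + 2) * Hp b := by ring
  rw [hX2]
  have : I (X ^ (a + 1) * derivative (Hp b)) = I (X ^ (a+2) * Hp b) - ((a:ℝ)+1) * I (X ^ a * Hp b) := by
    linarith
  rw [this]
  ring

lemma T_lt {a b : ℕ} (h : a < b) : T a b = 0 := by
  induction b generalizing a with
  | zero => omega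
  | succ b ih =>
    cases a with
    | zero => exact T_zero_succ b
    | succ a => rw [T_succ_succ]; rw [ih (by omega)]; ring

lemma T_diag (a : ℕ) : T a a = a.factorial := by
  induction a with
  | zero => unfold T; rw [pow_zero, one_mul, Hp_zero, I_one]; simp
  | succ a ih => rw [T_succ_succ, ih]; push_cast [Nat.factorial_succ]; ring

lemma I_mul_expand (p q : ℝ[X]) :
    I (p * q) = ∑ c ∈ Finset.range (p.natDegree + 1), p.coeff c * I (X ^ c * q) := by
  conv_lhs => rw [p.as_sum_range' (p.natDegree + 1) (Nat.lt_succ_self _)]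
  rw [Finset.sum_mul]
  have : ∀ c ∈ Finset.range (p.natDegree + 1),
      (monomial c (p.coeff c) : ℝ[X]) * q = C (p.coeff c) * (X ^ c * q) := by
    intro c _
    rw [← C_mul_X_pow_eq_monomial]
    ring
  rw [Finset.sum_congr rfl this]
  -- I of sum
  induction' (Finset.range (p.natDegree + 1)) using Finset.induction with i s hi ih
  · simp [I]
  · rw [Finset.sum_insert hi, Finset.sum_insert hi, I_add, I_smul, ih]

lemma I_sum {ι : Type*} [DecidableEq ι] (s : Finset ι) (f : ι → ℝ[X]) :
    I (∑ i ∈ s, f i) = ∑ i ∈ s, I (f i) := by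
  induction' s using Finset.induction with i s hi ih
  · simp [I]
  · rw [Finset.sum_insert hi, Finset.sum_insert hi, I_add, ih]

lemma I_Hp_mul_Hp_of_le {a b : ℕ} (h : a ≤ b) :
    I (Hp a * Hp b) = if a = b then (a.factorial : ℝ) else 0 := by
  rw [I_mul_expand, natDegree_Hp]
  have hsum : ∀ c ∈ Finset.range (a + 1), (Hp a).coeff c * I (X ^ c * Hp b)
      = if c = a then (Hp a).coeff c * T c b else 0 := by
    intro c hc
    rw [Finset.mem_range] at hc
    by_cases hca : c = a
    · simp [hca, T]
    · have : c < b := by omega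
      show (Hp a).coeff c * T c b = _
      rw [T_lt this]
      simp [hca]
  rw [Finset.sum_congr rfl hsum, Finset.sum_ite_eq' (Finset.range (a+1)) a]
  simp only [Finset.mem_range, Nat.lt_succ_self, if_true]
  rcases eq_or_lt_of_le h with rfl | hlt
  · rw [coeff_Hp_self, T_diag]; simp
  · rw [T_lt hlt]; simp [Nat.ne_of_lt hlt]

lemma I_Hp_mul_Hp (a b : ℕ) :
    I (Hp a * Hp b) = if a = b then (a.factorial : ℝ) else 0 := by
  rcases le_total a b with h | h
  · exact I_Hp_mul_Hp_of_le h
  · rw [mul_comm, I_Hp_mul_Hp_of_le h]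
    rcases eq_or_ne a b with rfl | hne
    · simp
    · simp [hne, Ne.symm hne]

lemma I_pow_mul_Hp (a b : ℕ) :
    I (X ^ a * Hp b) = T a b := rfl


/-- Type synonym of `ℝ` carrying the standard Gaussian as volume. -/
def GR : Type := ℝ
instance : MeasurableSpace GR := inferInstanceAs (MeasurableSpace ℝ)
instance : MeasureSpace GR := ⟨γ1⟩
instance : IsProbabilityMeasure (volume : Measure GR) :=
  inferInstanceAs (IsProbabilityMeasure γ1)
instance : SigmaFinite (volume : Measure GR) := inferInstance

variable {d k : ℕ}

lemma integrable_prod_poly (p : Fin d → ℝ[X]) :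
    Integrable (fun x : Fin d → ℝ => ∏ i, (p i).eval (x i)) (γd d) := by
  have h : Integrable (fun x : Fin d → GR => ∏ i, (p i).eval (show ℝ from x i)) volume :=
    Integrable.fintype_prod (𝕜 := ℝ) (f := fun i (t : GR) => (p i).eval (show ℝ from t))
      (fun i => integrable_γ1_poly (p i))
  exact h

lemma integral_prod_poly (p : Fin d → ℝ[X]) :
    ∫ x, ∏ i, (p i).eval (x i) ∂(γd d) = ∏ i, I (p i) := by
  have hs : ∀ _ : Fin d, SigmaFinite (volume : Measure GR) := fun _ => inferInstance
  have h := @integral_fintype_prod_eq_prod ℝ (Fin d) _ _ (fun _ => GR)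
    (fun i (t : GR) => (p i).eval (show ℝ from t)) (fun _ => inferInstance)
    (fun _ => (volume : Measure GR)) hs
  exact h

/-- Multiplicity of value `i` in the tuple `α`. -/
def mult (α : Fin k → Fin d) (i : Fin d) : ℕ := (Finset.univ.filter fun j => α j = i).card

lemma prod_eq_prod_pow_mult (α : Fin k → Fin d) (x : Fin d → ℝ) :
    ∏ j, x (α j) = ∏ i, x i ^ mult α i := by
  rw [← Finset.prod_fiberwise' Finset.univ α x]
  exact Finset.prod_congr rfl fun i _ => Finset.prod_const (x i)

lemma mult_comp (α : Fin k → Fin d) (σ : Equiv.Perm (Fin k)) :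
    mult (α ∘ σ) = mult α := by
  funext i
  unfold mult
  apply Finset.card_bij' (fun j _ => σ j) (fun j _ => σ.symm j) <;>
    simp [Function.comp]

lemma sum_mult (α : Fin k → Fin d) : ∑ i, mult α i = k := by
  unfold mult
  rw [← Finset.card_eq_sum_card_fiberwise (f := α) (t := Finset.univ)
    (fun j _ => Finset.mem_univ (α j))]
  simp

lemma exists_perm_of_mult_eq {α β : Fin k → Fin d} (h : mult α = mult β) :
    ∃ σ : Equiv.Perm (Fin k), α ∘ σ = β := by
  have hcard : ∀ i, Fintype.card {j // β j = i} = Fintype.card {j // α j = i} := by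
    intro i
    rw [Fintype.card_subtype, Fintype.card_subtype]
    have := congrFun h i
    unfold mult at this
    omega
  refine ⟨Equiv.ofFiberEquiv (f := β) (g := α)
    (fun i => Fintype.equivOfCardEq (hcard i)), funext fun j => ?_⟩
  exact Equiv.ofFiberEquiv_map (f := β) (g := α) _ j

/-- The stabilizer of `α` under precomposition has cardinality `∏ (mult α i)!`. -/
lemma card_stabilizer (α : Fin k → Fin d) :
    (Finset.univ.filter fun σ : Equiv.Perm (Fin k) => α ∘ σ = α).card
      = ∏ i, (mult α i).factorial := by
  have e : {σ : Equiv.Perm (Fin k) // α ∘ σ = α} ≃ ∀ i, Equiv.Perm {j // α j = i} := by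
    refine
      { toFun := fun sh i => Equiv.Perm.subtypePerm sh.1 fun j => by
          rw [show α ((sh.1 : Equiv.Perm (Fin k)) j) = α j from congrFun sh.2 j]
        invFun := fun σ => ⟨Equiv.ofFiberEquiv (f := α) (g := α) σ,
          funext fun j => Equiv.ofFiberEquiv_map (f := α) (g := α) σ j⟩
        left_inv := ?_
        right_inv := ?_ }
    · rintro ⟨σ, hσ⟩
      ext j
      simp [Equiv.ofFiberEquiv, Equiv.sigmaFiberEquiv]
    · intro σ
      funext i
      ext ⟨j, hj⟩
      subst hj
      simp [Equiv.ofFiberEquiv, Equiv.sigmaFiberEquiv]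
  calc (Finset.univ.filter fun σ : Equiv.Perm (Fin k) => α ∘ σ = α).card
      = Fintype.card {σ : Equiv.Perm (Fin k) // α ∘ σ = α} := (Fintype.card_subtype _).symm
    _ = Fintype.card (∀ i, Equiv.Perm {j // α j = i}) := Fintype.card_congr e
    _ = ∏ i, (mult α i).factorial := by
        rw [Fintype.card_pi]
        refine Finset.prod_congr rfl fun i _ => ?_
        rw [Fintype.card_perm, Fintype.card_subtype]
        rfl

lemma card_perm_eq (α β : Fin k → Fin d) :
    (Finset.univ.filter fun σ : Equiv.Perm (Fin k) => α ∘ σ = β).card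
      = if mult α = mult β then ∏ i, (mult α i).factorial else 0 := by
  split_ifs with h
  · obtain ⟨σ₀, hσ₀⟩ := exists_perm_of_mult_eq h
    rw [← card_stabilizer α]
    apply Finset.card_bij' (fun σ _ => σ * σ₀⁻¹) (fun τ _ => τ * σ₀)
    · intro σ hσ
      simp only [Finset.mem_filter, Finset.mem_univ, true_and] at hσ ⊢
      funext x
      simp only [Function.comp, Equiv.Perm.mul_apply]
      calc α (σ (σ₀⁻¹ x)) = β (σ₀⁻¹ x) := congrFun hσ _
        _ = α (σ₀ (σ₀⁻¹ x)) := (congrFun hσ₀ _).symm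
        _ = α x := by simp
    · intro τ hτ
      simp only [Finset.mem_filter, Finset.mem_univ, true_and] at hτ ⊢
      funext x
      simp only [Function.comp, Equiv.Perm.mul_apply]
      calc α (τ (σ₀ x)) = α (σ₀ x) := congrFun hτ _
        _ = β x := congrFun hσ₀ x
    · intro σ _; simp [mul_assoc]
    · intro τ _; simp [mul_assoc]
  · rw [Finset.card_eq_zero, Finset.filter_eq_empty_iff]
    intro σ _ hc
    exact h (by rw [← hc, mult_comp])


def Xp (α : Fin k → Fin d) : Fin d → ℝ[X] := fun i => X ^ (mult α i)
def Hf (α : Fin k → Fin d) : Fin d → ℝ[X] := fun i => Hp (mult α i)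
def Cd (α β : Fin k → Fin d) : ℝ :=
  ((Finset.univ.filter fun σ : Equiv.Perm (Fin k) => α ∘ σ = β).card : ℝ)

lemma exists_lt_of_sum_eq {a b : Fin d → ℕ} (hs : ∑ i, a i = ∑ i, b i) (hne : a ≠ b) :
    ∃ i, a i < b i := by
  by_contra h
  push_neg at h
  apply hne
  funext i
  exact ((Finset.sum_eq_sum_iff_of_le (fun i _ => h i)).mp hs.symm i (Finset.mem_univ i)).symm

lemma hXH (α β : Fin k → Fin d) : ∏ i, I (Xp α i * Hf β i) = Cd α β := by
  unfold Cd
  rw [card_perm_eq]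
  have hT : ∀ i, I (Xp α i * Hf β i) = T (mult α i) (mult β i) := fun i => rfl
  by_cases h : mult α = mult β
  · simp only [h, if_true]
    push_cast
    refine Finset.prod_congr rfl fun i _ => ?_
    rw [hT i, congrFun h i, T_diag]
  · obtain ⟨i, hi⟩ := exists_lt_of_sum_eq (by rw [sum_mult, sum_mult]) h
    simp only [h, if_false, Nat.cast_zero]
    apply Finset.prod_eq_zero (Finset.mem_univ i)
    rw [hT i, T_lt hi]

lemma hHH (α β : Fin k → Fin d) : ∏ i, I (Hf α i * Hf β i) = Cd α β := by
  unfold Cd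
  rw [card_perm_eq]
  by_cases h : mult α = mult β
  · simp only [h, if_true]
    push_cast
    refine Finset.prod_congr rfl fun i _ => ?_
    show I (Hp (mult α i) * Hp (mult β i)) = _
    rw [I_Hp_mul_Hp, congrFun h i]
    simp
  · obtain ⟨i, hi⟩ := Function.ne_iff.mp h
    simp only [h, if_false, Nat.cast_zero]
    apply Finset.prod_eq_zero (Finset.mem_univ i)
    show I (Hp (mult α i) * Hp (mult β i)) = 0
    rw [I_Hp_mul_Hp]
    simp [hi]

lemma pointwise_mul (v w : (Fin k → Fin d) → ℝ) (p q : (Fin k → Fin d) → Fin d → ℝ[X])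
    (y : Fin d → ℝ) :
    (∑ α, v α * ∏ i, (p α i).eval (y i)) * (∑ β, w β * ∏ i, (q β i).eval (y i))
      = ∑ α, ∑ β, (v α * w β) * ∏ i, (p α i * q β i).eval (y i) := by
  rw [Finset.sum_mul_sum]
  refine Finset.sum_congr rfl fun α _ => Finset.sum_congr rfl fun β _ => ?_
  simp only [eval_mul, Finset.prod_mul_distrib]
  ring

lemma integrable_sum_mul_sum (v w : (Fin k → Fin d) → ℝ)
    (p q : (Fin k → Fin d) → Fin d → ℝ[X]) :
    Integrable (fun y => (∑ α, v α * ∏ i, (p α i).eval (y i))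
      * (∑ β, w β * ∏ i, (q β i).eval (y i))) (γd d) := by
  have : (fun y : Fin d → ℝ => (∑ α, v α * ∏ i, (p α i).eval (y i))
      * (∑ β, w β * ∏ i, (q β i).eval (y i)))
      = fun y => ∑ α, ∑ β, (v α * w β) * ∏ i, ((p α i * q β i)).eval (y i) :=
    funext (pointwise_mul v w p q)
  rw [this]
  exact integrable_finset_sum _ fun α _ => integrable_finset_sum _ fun β _ =>
    (integrable_prod_poly _).const_mul _

lemma integral_sum_mul_sum (v w : (Fin k → Fin d) → ℝ)
    (p q : (Fin k → Fin d) → Fin d → ℝ[X]) :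
    ∫ y, (∑ α, v α * ∏ i, (p α i).eval (y i))
      * (∑ β, w β * ∏ i, (q β i).eval (y i)) ∂(γd d)
      = ∑ α, ∑ β, (v α * w β) * ∏ i, I (p α i * q β i) := by
  have h := funext (pointwise_mul v w p q)
  rw [h, integral_finset_sum _ fun α _ => integrable_finset_sum _ fun β _ =>
    (integrable_prod_poly _).const_mul _]
  refine Finset.sum_congr rfl fun α _ => ?_
  rw [integral_finset_sum _ fun β _ => (integrable_prod_poly _).const_mul _]
  refine Finset.sum_congr rfl fun β _ => ?_
  rw [integral_const_mul, integral_prod_poly]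


lemma hMval (α β : Fin k → Fin d) :
    gaussTensorMoment d k α β = ∏ i, I (Xp α i * Xp β i) := by
  unfold gaussTensorMoment
  have h : (fun x : Fin d → ℝ => (∏ j, x (α j)) * (∏ j, x (β j)))
      = fun x => ∏ i, (Xp α i * Xp β i).eval (x i) := by
    funext x
    rw [prod_eq_prod_pow_mult α x, prod_eq_prod_pow_mult β x, ← Finset.prod_mul_distrib]
    exact Finset.prod_congr rfl fun i _ => by simp [Xp]
  rw [h, integral_prod_poly]

lemma Cd_symm (α β : Fin k → Fin d) : Cd α β = Cd β α := by
  unfold Cd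
  rw [card_perm_eq, card_perm_eq]
  by_cases h : mult α = mult β
  · simp only [h, if_true]
  · rw [if_neg h, if_neg (Ne.symm h)]

lemma hSymProj (α β : Fin k → Fin d) :
    (Nat.factorial k : ℝ) * symProj d k α β = Cd α β := by
  unfold symProj Cd
  have : (Nat.factorial k : ℝ) ≠ 0 := Nat.cast_ne_zero.mpr (Nat.factorial_ne_zero k)
  field_simp

lemma hMsymm (α β : Fin k → Fin d) :
    gaussTensorMoment d k α β = gaussTensorMoment d k β α := by
  unfold gaussTensorMoment
  have h : (fun x : Fin d → ℝ => (∏ j, x (α j)) * (∏ j, x (β j)))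
      = fun x => (∏ j, x (β j)) * (∏ j, x (α j)) := funext fun x => mul_comm _ _
  rw [h]


end
end GaussAux

open GaussAux

/-- For `x ~ N(0, I_d)`, `E[Vec(x^{⊗k}) Vec(x^{⊗k})ᵀ] ⪰ k! Π`, where `Π` is the
orthogonal projection onto vectorized symmetric `k`-tensors. -/
theorem gaussTensorMoment_ge_symProj (d k : ℕ) :
    (gaussTensorMoment d k - (Nat.factorial k : ℝ) • symProj d k).PosSemidef := by
  rw [Matrix.posSemidef_iff_dotProduct_mulVec]
  constructor
  · -- Hermitian
    apply Matrix.ext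
    intro α β
    rw [Matrix.conjTranspose_apply, Matrix.sub_apply, Matrix.sub_apply, Matrix.smul_apply,
      Matrix.smul_apply, star_trivial]
    have h1 := hMsymm (d := d) (k := k) α β
    have h2 : (Nat.factorial k : ℝ) • symProj d k β α = (Nat.factorial k : ℝ) • symProj d k α β := by
      rw [smul_eq_mul, smul_eq_mul, hSymProj, hSymProj, Cd_symm]
    rw [← h1, h2]
  · intro v
    have hv : star v = v := funext fun α => star_trivial _
    rw [hv]
    simp only [dotProduct, Matrix.mulVec, Matrix.sub_apply, Matrix.smul_apply,
      smul_eq_mul]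
    -- rewrite entries
    have hrw : ∀ α : Fin k → Fin d,
        v α * (∑ β, (gaussTensorMoment d k α β - (Nat.factorial k : ℝ) * symProj d k α β) * v β)
        = ∑ β, ((v α * v β) * ∏ i, I (Xp α i * Xp β i) - (v α * v β) * Cd α β) := by
      intro α
      rw [Finset.mul_sum]
      refine Finset.sum_congr rfl fun β _ => ?_
      rw [hMval, ← hSymProj]
      ring
    rw [Finset.sum_congr rfl fun α _ => hrw α]
    rw [Finset.sum_congr rfl fun α (h : α ∈ Finset.univ) => Finset.sum_sub_distrib
      (f := fun β => (v α * v β) * ∏ i, I (Xp α i * Xp β i))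
      (g := fun β => (v α * v β) * Cd α β)]
    rw [Finset.sum_sub_distrib]
    set sP : ℝ := ∑ α, ∑ β, (v α * v β) * ∏ i, I (Xp α i * Xp β i) with hsP
    set S : ℝ := ∑ α, ∑ β, (v α * v β) * Cd α β with hS
    rw [sub_nonneg]
    -- the three integrals
    set P : (Fin d → ℝ) → ℝ := fun y => ∑ α, v α * ∏ i, (Xp α i).eval (y i) with hP
    set G : (Fin d → ℝ) → ℝ := fun y => ∑ α, v α * ∏ i, (Hf α i).eval (y i) with hG
    have hPP : ∫ y, P y * P y ∂(γd d) = sP := by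
      rw [hP, integral_sum_mul_sum v v (fun α => Xp α) (fun α => Xp α)]
    have hPG : ∫ y, P y * G y ∂(γd d) = S := by
      rw [hP, hG, integral_sum_mul_sum v v (fun α => Xp α) (fun α => Hf α)]
      exact Finset.sum_congr rfl fun α _ => Finset.sum_congr rfl fun β _ => by rw [hXH]
    have hGG : ∫ y, G y * G y ∂(γd d) = S := by
      rw [hG, integral_sum_mul_sum v v (fun α => Hf α) (fun α => Hf α)]
      exact Finset.sum_congr rfl fun α _ => Finset.sum_congr rfl fun β _ => by rw [hHH]
    have hIPP : Integrable (fun y => P y * P y) (γd d) := integrable_sum_mul_sum v v _ _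
    have hIPG : Integrable (fun y => P y * G y) (γd d) := integrable_sum_mul_sum v v _ _
    have hIGG : Integrable (fun y => G y * G y) (γd d) := integrable_sum_mul_sum v v _ _
    have hnn : 0 ≤ ∫ y, (P y - G y)^2 ∂(γd d) :=
      integral_nonneg fun y => sq_nonneg _
    have hexp : ∫ y, (P y - G y)^2 ∂(γd d) = sP - 2 * S + S := by
      have hptw : (fun y => (P y - G y)^2)
          = fun y => P y * P y - 2 * (P y * G y) + G y * G y := funext fun y => by ring
      have h2' : Integrable (fun y => 2 * (P y * G y)) (γd d) := hIPG.const_mul 2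
      have hsub : Integrable (fun y => P y * P y - 2 * (P y * G y)) (γd d) := hIPP.sub h2'
      rw [hptw, integral_add hsub hIGG, integral_sub hIPP h2', integral_const_mul,
        hPP, hPG, hGG]
    rw [hexp] at hnn
    linarith
end

section
/- Let f : ℝ → ℝ be a C² function, a ~ Unif({−1,1}), and b a real random variable with density μ_b. For any A ≥ 1, there exists a bounded function v(a,b) supported on {−1,1} × [0, 2A] such that E_{a,b}[v(a,b)·ReLU(ax + b)] = f(x) for all |x| ≤ A, with sup|v(a,b)| = O( sup_{|x|≤A, k≤2}|f^{(k)}(x)| · (1/∫_A^{2A} μ_b(t)dt + 1/inf_{t∈[0,A]} μ_b(t)) ). -/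
open MeasureTheory Set

private lemma ftc_piece1 (f : ℝ → ℝ)
    (hd1 : ∀ t, HasDerivAt f (deriv f t) t)
    (hd2 : ∀ t, HasDerivAt (deriv f) (deriv (deriv f) t) t)
    (hf2 : Continuous (deriv (deriv f))) (x c d : ℝ) :
    ∫ t in c..d, deriv (deriv f) t * (t - x) =
      (deriv f d * (d - x) - f d) - (deriv f c * (c - x) - f c) := by
  apply intervalIntegral.integral_eq_sub_of_hasDerivAt
  · intro t _
    have h : HasDerivAt (fun t => deriv f t * (t - x) - f t)
        (deriv (deriv f) t * (t - x) + deriv f t * 1 - deriv f t) t :=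
      (((hd2 t).mul ((hasDerivAt_id t).sub_const x))).sub (hd1 t)
    simpa using h
  · exact ((hf2.mul (by continuity)).intervalIntegrable c d)

private lemma ftc_piece2 (f : ℝ → ℝ)
    (hd1 : ∀ t, HasDerivAt f (deriv f t) t)
    (hd2 : ∀ t, HasDerivAt (deriv f) (deriv (deriv f) t) t)
    (hf2 : Continuous (deriv (deriv f))) (x c d : ℝ) :
    ∫ t in c..d, deriv (deriv f) (-t) * (x + t) =
      (-(deriv f (-d)) * (x + d) - f (-d)) - (-(deriv f (-c)) * (x + c) - f (-c)) := by
  apply intervalIntegral.integral_eq_sub_of_hasDerivAt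
  · intro t _
    have hneg : HasDerivAt (fun t : ℝ => -t) (-1) t := by
      exact (hasDerivAt_id' t).neg
    have hA : HasDerivAt (fun t => -(deriv f (-t))) (deriv (deriv f) (-t)) t := by
      have := ((hd2 (-t)).comp t hneg).neg
      exact this.congr_deriv (by ring)
    have hB : HasDerivAt (fun t => f (-t)) (-(deriv f (-t))) t := by
      have := (hd1 (-t)).comp t hneg
      exact this.congr_deriv (by ring)
    have h : HasDerivAt (fun t => -(deriv f (-t)) * (x + t) - f (-t))
        (deriv (deriv f) (-t) * (x + t) + (-(deriv f (-t))) * 1 - (-(deriv f (-t)))) t :=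
      (hA.mul ((hasDerivAt_id t).const_add x)).sub hB
    simpa using h
  · exact (((hf2.comp continuous_neg).mul (by continuity)).intervalIntegrable c d)

private lemma key_identity (f : ℝ → ℝ)
    (hd1 : ∀ t, HasDerivAt f (deriv f t) t)
    (hd2 : ∀ t, HasDerivAt (deriv f) (deriv (deriv f) t) t)
    (hf2 : Continuous (deriv (deriv f)))
    (A x : ℝ) (hx1 : -A ≤ x) (hx2 : x ≤ A) :
    (∫ t in (0:ℝ)..A, deriv (deriv f) t * max (t - x) 0)
      + (∫ t in (0:ℝ)..A, deriv (deriv f) (-t) * max (x + t) 0)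
    = f x - (f A + f (-A) - f 0 - A * deriv f A + A * deriv f (-A))
        - (deriv f A + deriv f (-A) - deriv f 0) * x := by
  have hA : (0:ℝ) ≤ A := by linarith [abs_nonneg x]
  have hcont1 : Continuous (fun t => deriv (deriv f) t * max (t - x) 0) :=
    hf2.mul (by continuity)
  have hcont2 : Continuous (fun t => deriv (deriv f) (-t) * max (x + t) 0) :=
    (hf2.comp continuous_neg).mul (by continuity)
  rcases le_or_gt 0 x with hx0 | hx0
  · have hsplit : (∫ t in (0:ℝ)..x, deriv (deriv f) t * max (t - x) 0)
        + (∫ t in x..A, deriv (deriv f) t * max (t - x) 0)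
        = ∫ t in (0:ℝ)..A, deriv (deriv f) t * max (t - x) 0 :=
      intervalIntegral.integral_add_adjacent_intervals
        (hcont1.intervalIntegrable 0 x) (hcont1.intervalIntegrable x A)
    have e1 : (∫ t in (0:ℝ)..x, deriv (deriv f) t * max (t - x) 0) = 0 := by
      rw [intervalIntegral.integral_congr (g := fun _ => (0:ℝ))]
      · simp
      · intro t ht
        rw [uIcc_of_le hx0] at ht
        simp [max_eq_right (by linarith [ht.2] : t - x ≤ 0)]
    have e2 : (∫ t in x..A, deriv (deriv f) t * max (t - x) 0)
        = ∫ t in x..A, deriv (deriv f) t * (t - x) := by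
      apply intervalIntegral.integral_congr
      intro t ht
      rw [uIcc_of_le hx2] at ht
      simp [max_eq_left (by linarith [ht.1] : (0:ℝ) ≤ t - x)]
    have e3 : (∫ t in (0:ℝ)..A, deriv (deriv f) (-t) * max (x + t) 0)
        = ∫ t in (0:ℝ)..A, deriv (deriv f) (-t) * (x + t) := by
      apply intervalIntegral.integral_congr
      intro t ht
      rw [uIcc_of_le hA] at ht
      simp [max_eq_left (by linarith [ht.1] : (0:ℝ) ≤ x + t)]
    rw [← hsplit, e1, e2, e3, ftc_piece1 f hd1 hd2 hf2, ftc_piece2 f hd1 hd2 hf2]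
    simp only [neg_zero]
    ring
  · have e2 : (∫ t in (0:ℝ)..A, deriv (deriv f) t * max (t - x) 0)
        = ∫ t in (0:ℝ)..A, deriv (deriv f) t * (t - x) := by
      apply intervalIntegral.integral_congr
      intro t ht
      rw [uIcc_of_le hA] at ht
      simp [max_eq_left (by linarith [ht.1] : (0:ℝ) ≤ t - x)]
    have hnx : (0:ℝ) ≤ -x := by linarith
    have hnxA : -x ≤ A := by linarith
    have hsplit : (∫ t in (0:ℝ)..(-x), deriv (deriv f) (-t) * max (x + t) 0)
        + (∫ t in (-x)..A, deriv (deriv f) (-t) * max (x + t) 0)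
        = ∫ t in (0:ℝ)..A, deriv (deriv f) (-t) * max (x + t) 0 :=
      intervalIntegral.integral_add_adjacent_intervals
        (hcont2.intervalIntegrable 0 (-x)) (hcont2.intervalIntegrable (-x) A)
    have e1 : (∫ t in (0:ℝ)..(-x), deriv (deriv f) (-t) * max (x + t) 0) = 0 := by
      rw [intervalIntegral.integral_congr (g := fun _ => (0:ℝ))]
      · simp
      · intro t ht
        rw [uIcc_of_le hnx] at ht
        simp [max_eq_right (by linarith [ht.2] : x + t ≤ 0)]
    have e3 : (∫ t in (-x)..A, deriv (deriv f) (-t) * max (x + t) 0)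
        = ∫ t in (-x)..A, deriv (deriv f) (-t) * (x + t) := by
      apply intervalIntegral.integral_congr
      intro t ht
      rw [uIcc_of_le hnxA] at ht
      simp [max_eq_left (by linarith [ht.1] : (0:ℝ) ≤ x + t)]
    rw [e2, ← hsplit, e1, e3, ftc_piece1 f hd1 hd2 hf2, ftc_piece2 f hd1 hd2 hf2]
    simp only [neg_neg, neg_zero]
    ring

private lemma integral_decomp (μb g k : ℝ → ℝ) (hμ : Continuous μb) (hg : Continuous g)
    (hk : Continuous k) (A : ℝ) (hA : 0 ≤ A)
    (hpos : ∀ t ∈ Ico (0:ℝ) A, μb t ≠ 0) (cc : ℝ) :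
    ∫ t, ((Ico (0:ℝ) A).indicator (fun s => g s / μb s) t
        + (Icc A (2*A)).indicator (fun _ => cc) t) * k t * μb t
    = (∫ t in (0:ℝ)..A, g t * k t) + cc * ∫ t in Icc A (2*A), k t * μb t := by
  have hfun : (fun t => ((Ico (0:ℝ) A).indicator (fun s => g s / μb s) t
        + (Icc A (2*A)).indicator (fun _ => cc) t) * k t * μb t)
      = fun t => (Ico (0:ℝ) A).indicator (fun s => g s * k s) t
        + (Icc A (2*A)).indicator (fun s => cc * (k s * μb s)) t := by
    funext t
    by_cases h1 : t ∈ Ico (0:ℝ) A <;> by_cases h2 : t ∈ Icc A (2*A)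
    · exact absurd h2.1 (not_le.mpr h1.2)
    · rw [indicator_of_mem h1, indicator_of_mem h1, indicator_of_notMem h2,
        indicator_of_notMem h2]
      field_simp [hpos t h1]
      ring
    · rw [indicator_of_notMem h1, indicator_of_notMem h1, indicator_of_mem h2,
        indicator_of_mem h2]
      ring
    · rw [indicator_of_notMem h1, indicator_of_notMem h1, indicator_of_notMem h2,
        indicator_of_notMem h2]
      ring
  rw [hfun]
  have hi1 : Integrable ((Ico (0:ℝ) A).indicator (fun s => g s * k s)) := by
    rw [integrable_indicator_iff measurableSet_Ico]
    exact ((hg.mul hk).integrableOn_Icc).mono_set Ico_subset_Icc_self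
  have hi2 : Integrable ((Icc A (2*A)).indicator (fun s => cc * (k s * μb s))) := by
    rw [integrable_indicator_iff measurableSet_Icc]
    exact (continuous_const.mul (hk.mul hμ)).integrableOn_Icc
  rw [integral_add hi1 hi2, integral_indicator measurableSet_Ico,
    integral_indicator measurableSet_Icc, integral_const_mul,
    MeasureTheory.Measure.restrict_congr_set Ico_ae_eq_Ioc,
    ← intervalIntegral.integral_of_le hA]

set_option maxHeartbeats 2000000 in
/-- **Univariate ReLU approximation.** For any `C²` function `f`, `a ~ Unif{−1,1}` and `b`
with density `μb` (continuous, strictly positive on `[0,2A]`), and any `A ≥ 1`, there is a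
bounded `v(a,b)` supported on `{−1,1} × [0,2A]` with
`E_{a,b}[v(a,b) ReLU(ax+b)] = f(x)` for `|x| ≤ A`, and
`sup|v| = O(Mf (1/∫_A^{2A} μb + 1/inf_{[0,A]} μb))` where `Mf` bounds `f, f', f''` on
`[−A, A]`. -/
theorem relu_univariate_approximation :
    ∃ K > 0, ∀ (f : ℝ → ℝ), ContDiff ℝ 2 f →
      ∀ (A : ℝ), 1 ≤ A →
      ∀ (μb : ℝ → ℝ), Continuous μb → (∀ t, 0 ≤ μb t) →
        (∫ t, μb t = 1) → Integrable μb →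
        (∀ t ∈ Icc (0 : ℝ) (2 * A), 0 < μb t) →
      ∀ (Mf : ℝ), (∀ x ∈ Icc (-A) A,
          |f x| ≤ Mf ∧ |deriv f x| ≤ Mf ∧ |deriv (deriv f) x| ≤ Mf) →
      ∃ v : ℝ → ℝ → ℝ,
        (∀ a t, v a t ≠ 0 → (a = 1 ∨ a = -1) ∧ t ∈ Icc (0 : ℝ) (2 * A)) ∧
        (∀ a t, |v a t| ≤ K * Mf *
            (1 / (∫ t in Icc A (2 * A), μb t) + 1 / sInf (μb '' Icc (0 : ℝ) A))) ∧
        ∀ x : ℝ, |x| ≤ A →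
          (1 / 2) * (∫ t, v 1 t * max (x + t) 0 * μb t)
            + (1 / 2) * (∫ t, v (-1) t * max (-x + t) 0 * μb t) = f x := by
  refine ⟨8, by norm_num, ?_⟩
  intro f hf A hA μb hμc hμnn _ _ hμpos Mf hMf
  -- smoothness facts
  have h2 : ContDiff ℝ (1+1 : ℕ) f := by exact_mod_cast hf
  have h1 : ContDiff ℝ 1 (deriv f) := (contDiff_succ_iff_deriv.mp h2).2.2
  have h1' : ContDiff ℝ (0+1 : ℕ) (deriv f) := by exact_mod_cast h1
  have hf2' : ContDiff ℝ 0 (deriv (deriv f)) := (contDiff_succ_iff_deriv.mp h1').2.2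
  have hf2 : Continuous (deriv (deriv f)) := hf2'.continuous
  have hd1 : ∀ t, HasDerivAt f (deriv f t) t :=
    fun t => ((hf.differentiable (by norm_num)) t).hasDerivAt
  have hd2 : ∀ t, HasDerivAt (deriv f) (deriv (deriv f) t) t :=
    fun t => ((h1.differentiable (by norm_num)) t).hasDerivAt
  have hA0 : (0:ℝ) ≤ A := by linarith
  -- Mf ≥ 0
  have h0mem : (0:ℝ) ∈ Icc (-A) A := ⟨by linarith, by linarith⟩
  have hAmem : A ∈ Icc (-A) A := ⟨by linarith, le_rfl⟩
  have hnAmem : -A ∈ Icc (-A) A := ⟨le_rfl, by linarith⟩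
  have hMf0 : 0 ≤ Mf := le_trans (abs_nonneg _) (hMf 0 h0mem).1
  -- the infimum m
  set m := sInf (μb '' Icc (0:ℝ) A) with hm_def
  have hne : (Icc (0:ℝ) A).Nonempty := ⟨0, by constructor <;> linarith⟩
  obtain ⟨t0, ht0, hmin⟩ := isCompact_Icc.exists_isMinOn hne hμc.continuousOn
  have hmeq : m = μb t0 := by
    apply le_antisymm
    · exact csInf_le ((isCompact_Icc.image hμc).bddBelow) (mem_image_of_mem μb ht0)
    · apply le_csInf ⟨μb t0, mem_image_of_mem μb ht0⟩
      rintro y ⟨t, ht, rfl⟩; exact hmin ht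
  have hmpos : 0 < m := hmeq ▸ hμpos t0 ⟨ht0.1, by linarith [ht0.2]⟩
  have hmle : ∀ t ∈ Icc (0:ℝ) A, m ≤ μb t := fun t ht => hmeq ▸ hmin ht
  -- I0 and I1
  set I0 := ∫ t in Icc A (2*A), μb t with hI0_def
  set I1 := ∫ t in Icc A (2*A), t * μb t with hI1_def
  have hI0pos : 0 < I0 := by
    have hne2 : (Icc A (2*A)).Nonempty := ⟨A, by constructor <;> linarith⟩
    obtain ⟨t1, ht1, hmin1⟩ := isCompact_Icc.exists_isMinOn hne2 hμc.continuousOn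
    have hc0 : 0 < μb t1 := hμpos t1 ⟨by linarith [ht1.1], ht1.2⟩
    have hmeas : (volume (Icc A (2*A))).toReal = A := by
      rw [Real.volume_Icc, ENNReal.toReal_ofReal (by linarith)]; ring
    have hge : μb t1 * (volume (Icc A (2*A))).toReal ≤ I0 :=
      MeasureTheory.setIntegral_ge_of_const_le_real (μ := volume) measurableSet_Icc
        (by simp [Real.volume_Icc]) (fun t ht => hmin1 ht) (hμc.integrableOn_Icc)
    rw [hmeas] at hge
    nlinarith
  have hI1ge : A * I0 ≤ I1 := by
    rw [hI1_def, hI0_def, ← integral_const_mul]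
    apply setIntegral_mono_on ((continuous_const.mul hμc).integrableOn_Icc)
      ((continuous_id.mul hμc).integrableOn_Icc) measurableSet_Icc
    intro t ht
    exact mul_le_mul_of_nonneg_right ht.1 (hμnn t)
  have hI1pos : 0 < I1 := lt_of_lt_of_le (by nlinarith) hI1ge
  -- constants
  set β := deriv f A + deriv f (-A) - deriv f 0 with hβ_def
  set α := f A + f (-A) - f 0 - A * deriv f A + A * deriv f (-A) with hα_def
  set cp := β / I0 + α / I1 with hcp_def
  set cm := -β / I0 + α / I1 with hcm_def
  have hβbd : |β| ≤ 3 * Mf := by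
    have := (hMf A hAmem).2.1; have := (hMf (-A) hnAmem).2.1; have := (hMf 0 h0mem).2.1
    rw [hβ_def]
    calc |deriv f A + deriv f (-A) - deriv f 0|
        ≤ |deriv f A| + |deriv f (-A)| + |deriv f 0| := by
          apply (abs_sub _ _).trans; gcongr; exact abs_add_le _ _
      _ ≤ 3 * Mf := by linarith
  have hαbd : |α| ≤ (3 + 2*A) * Mf := by
    have hfA := (hMf A hAmem).1; have hfnA := (hMf (-A) hnAmem).1
    have hf0 := (hMf 0 h0mem).1
    have hdA := (hMf A hAmem).2.1; have hdnA := (hMf (-A) hnAmem).2.1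
    have h1' : |A * deriv f A| ≤ A * Mf := by
      rw [abs_mul, abs_of_nonneg hA0]; exact mul_le_mul_of_nonneg_left hdA hA0
    have h2' : |A * deriv f (-A)| ≤ A * Mf := by
      rw [abs_mul, abs_of_nonneg hA0]; exact mul_le_mul_of_nonneg_left hdnA hA0
    rw [hα_def]
    have : |f A + f (-A) - f 0 - A * deriv f A + A * deriv f (-A)|
        ≤ |f A| + |f (-A)| + |f 0| + |A * deriv f A| + |A * deriv f (-A)| := by
      calc |f A + f (-A) - f 0 - A * deriv f A + A * deriv f (-A)|
          ≤ |f A + f (-A) - f 0 - A * deriv f A| + |A * deriv f (-A)| := abs_add_le _ _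
        _ ≤ |f A + f (-A) - f 0| + |A * deriv f A| + |A * deriv f (-A)| := by
            gcongr; exact abs_sub _ _
        _ ≤ |f A + f (-A)| + |f 0| + |A * deriv f A| + |A * deriv f (-A)| := by
            gcongr; exact abs_sub _ _
        _ ≤ |f A| + |f (-A)| + |f 0| + |A * deriv f A| + |A * deriv f (-A)| := by
            gcongr; exact abs_add_le _ _
    linarith
  have hcpbd : ∀ c ∈ ({cp, cm} : Set ℝ), |c| ≤ 8 * Mf / I0 := by
    have hab : |α| / I1 ≤ 5 * Mf / I0 := by
      have h5 : (3 + 2*A) * Mf ≤ 5 * A * Mf := by nlinarith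
      have : |α| / I1 ≤ (3 + 2*A) * Mf / (A * I0) := by
        apply div_le_div₀ (by positivity) hαbd (by nlinarith) hI1ge
      apply this.trans
      rw [div_le_div_iff₀ (by nlinarith) hI0pos]
      nlinarith
    have hbb : |β| / I0 ≤ 3 * Mf / I0 := by
      apply div_le_div₀ (by positivity) hβbd hI0pos le_rfl
    rintro c (rfl | rfl)
    · calc |β / I0 + α / I1| ≤ |β / I0| + |α / I1| := abs_add_le _ _
        _ = |β| / I0 + |α| / I1 := by
            rw [abs_div, abs_div, abs_of_pos hI0pos, abs_of_pos hI1pos]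
        _ ≤ 3 * Mf / I0 + 5 * Mf / I0 := by linarith
        _ = 8 * Mf / I0 := by ring
    · calc |-β / I0 + α / I1| ≤ |-β / I0| + |α / I1| := abs_add_le _ _
        _ = |β| / I0 + |α| / I1 := by
            rw [abs_div, abs_div, abs_of_pos hI0pos, abs_of_pos hI1pos, abs_neg]
        _ ≤ 3 * Mf / I0 + 5 * Mf / I0 := by linarith
        _ = 8 * Mf / I0 := by ring
  -- define v
  set g1 : ℝ → ℝ := fun s => 2 * deriv (deriv f) (-s) with hg1_def
  set g2 : ℝ → ℝ := fun s => 2 * deriv (deriv f) s with hg2_def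
  have hg1c : Continuous g1 := (continuous_const.mul (hf2.comp continuous_neg))
  have hg2c : Continuous g2 := continuous_const.mul hf2
  set v : ℝ → ℝ → ℝ := fun a t =>
    if a = 1 then (Ico (0:ℝ) A).indicator (fun s => g1 s / μb s) t
        + (Icc A (2*A)).indicator (fun _ => cp) t
    else if a = -1 then (Ico (0:ℝ) A).indicator (fun s => g2 s / μb s) t
        + (Icc A (2*A)).indicator (fun _ => cm) t
    else 0 with hv_def
  have hv1 : ∀ t, v 1 t = (Ico (0:ℝ) A).indicator (fun s => g1 s / μb s) t
        + (Icc A (2*A)).indicator (fun _ => cp) t := by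
    intro t; rw [hv_def]; norm_num
  have hvm1 : ∀ t, v (-1) t = (Ico (0:ℝ) A).indicator (fun s => g2 s / μb s) t
        + (Icc A (2*A)).indicator (fun _ => cm) t := by
    intro t; rw [hv_def]; norm_num
  refine ⟨v, ?_, ?_, ?_⟩
  · -- support
    intro a t hvat
    by_cases ha1 : a = 1
    · subst ha1
      refine ⟨Or.inl rfl, ?_⟩
      rw [hv1 t] at hvat
      by_cases h1 : t ∈ Ico (0:ℝ) A
      · exact ⟨h1.1, by linarith [h1.2]⟩
      · by_cases h2 : t ∈ Icc A (2*A)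
        · exact ⟨by linarith [h2.1], h2.2⟩
        · exact absurd (by rw [indicator_of_notMem h1, indicator_of_notMem h2]; ring) hvat
    · by_cases ha2 : a = -1
      · subst ha2
        refine ⟨Or.inr rfl, ?_⟩
        rw [hvm1 t] at hvat
        by_cases h1 : t ∈ Ico (0:ℝ) A
        · exact ⟨h1.1, by linarith [h1.2]⟩
        · by_cases h2 : t ∈ Icc A (2*A)
          · exact ⟨by linarith [h2.1], h2.2⟩
          · exact absurd (by rw [indicator_of_notMem h1, indicator_of_notMem h2]; ring) hvat
      · exact absurd (by rw [hv_def]; simp [ha1, ha2]) hvat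
  · -- bound
    intro a t
    have hRHS : 8 * Mf / I0 ≤ 8 * Mf * (1 / I0 + 1 / m) := by
      rw [mul_add]
      have : 0 ≤ 8 * Mf * (1 / m) := by positivity
      have h8 : 8 * Mf / I0 = 8 * Mf * (1 / I0) := by ring
      linarith [h8 ▸ le_refl (8 * Mf / I0)]
    have hbound : ∀ (g : ℝ → ℝ) (cc : ℝ), (∀ s ∈ Ico (0:ℝ) A, |g s| ≤ 2 * Mf) →
        |cc| ≤ 8 * Mf / I0 →
        |(Ico (0:ℝ) A).indicator (fun s => g s / μb s) t
          + (Icc A (2*A)).indicator (fun _ => cc) t| ≤ 8 * Mf * (1 / I0 + 1 / m) := by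
      intro g cc hgbd hccbd
      by_cases h1 : t ∈ Ico (0:ℝ) A
      · have h2 : t ∉ Icc A (2*A) := fun h2 => absurd h2.1 (not_le.mpr h1.2)
        rw [indicator_of_mem h1, indicator_of_notMem h2, add_zero]
        have hμt : m ≤ μb t := hmle t ⟨h1.1, le_of_lt h1.2⟩
        have : |g t / μb t| = |g t| / μb t := by
          rw [abs_div, abs_of_pos (lt_of_lt_of_le hmpos hμt)]
        rw [this]
        calc |g t| / μb t ≤ 2 * Mf / m :=
              div_le_div₀ (by positivity) (hgbd t h1) hmpos hμt
          _ ≤ 8 * Mf * (1 / I0 + 1 / m) := by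
              rw [mul_add]
              have e1 : 2 * Mf / m ≤ 8 * Mf * (1 / m) := by
                rw [mul_one_div, div_le_div_iff₀ hmpos hmpos]; nlinarith
              have e2 : 0 ≤ 8 * Mf * (1 / I0) := by positivity
              linarith
      · rw [indicator_of_notMem h1, zero_add]
        by_cases h2 : t ∈ Icc A (2*A)
        · rw [indicator_of_mem h2]; exact hccbd.trans hRHS
        · rw [indicator_of_notMem h2]
          simp only [abs_zero]
          positivity
    by_cases ha1 : a = 1
    · subst ha1
      rw [hv1 t]
      apply hbound g1 cp _ (hcpbd cp (Or.inl rfl))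
      intro s hs
      have : -s ∈ Icc (-A) A := ⟨by linarith [hs.2], by linarith [hs.1]⟩
      have h := (hMf (-s) this).2.2
      rw [hg1_def]
      calc |2 * deriv (deriv f) (-s)| = 2 * |deriv (deriv f) (-s)| := by
            rw [abs_mul]; norm_num
        _ ≤ 2 * Mf := by linarith
    · by_cases ha2 : a = -1
      · subst ha2
        rw [hvm1 t]
        apply hbound g2 cm _ (hcpbd cm (Or.inr rfl))
        intro s hs
        have : s ∈ Icc (-A) A := ⟨by linarith [hs.1], by linarith [hs.2]⟩
        have h := (hMf s this).2.2
        rw [hg2_def]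
        calc |2 * deriv (deriv f) s| = 2 * |deriv (deriv f) s| := by
              rw [abs_mul]; norm_num
          _ ≤ 2 * Mf := by linarith
      · rw [hv_def]
        simp only [ha1, ha2, if_false]
        simp only [abs_zero]
        positivity
  · -- the main identity
    intro x hx
    have hx1 : -A ≤ x := neg_le_of_abs_le hx
    have hx2 : x ≤ A := le_of_abs_le hx
    have hμne : ∀ t ∈ Ico (0:ℝ) A, μb t ≠ 0 :=
      fun t ht => ne_of_gt (hμpos t ⟨ht.1, by linarith [ht.2]⟩)
    have hk1 : Continuous (fun t : ℝ => max (x + t) 0) :=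
      (continuous_const.add continuous_id).max continuous_const
    have hk2 : Continuous (fun t : ℝ => max (-x + t) 0) :=
      (continuous_const.add continuous_id).max continuous_const
    -- rewrite the two integrals
    have hint1 : (∫ t, v 1 t * max (x + t) 0 * μb t)
        = (∫ t in (0:ℝ)..A, g1 t * max (x + t) 0)
          + cp * ∫ t in Icc A (2*A), max (x + t) 0 * μb t := by
      have : (fun t => v 1 t * max (x + t) 0 * μb t)
          = fun t => ((Ico (0:ℝ) A).indicator (fun s => g1 s / μb s) t
            + (Icc A (2*A)).indicator (fun _ => cp) t) * max (x + t) 0 * μb t := by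
        funext t; rw [hv1 t]
      rw [this]
      exact integral_decomp μb g1 _ hμc hg1c hk1 A hA0 hμne cp
    have hint2 : (∫ t, v (-1) t * max (-x + t) 0 * μb t)
        = (∫ t in (0:ℝ)..A, g2 t * max (-x + t) 0)
          + cm * ∫ t in Icc A (2*A), max (-x + t) 0 * μb t := by
      have : (fun t => v (-1) t * max (-x + t) 0 * μb t)
          = fun t => ((Ico (0:ℝ) A).indicator (fun s => g2 s / μb s) t
            + (Icc A (2*A)).indicator (fun _ => cm) t) * max (-x + t) 0 * μb t := by
        funext t; rw [hvm1 t]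
      rw [this]
      exact integral_decomp μb g2 _ hμc hg2c hk2 A hA0 hμne cm
    -- evaluate tail integrals
    have htail1 : (∫ t in Icc A (2*A), max (x + t) 0 * μb t) = x * I0 + I1 := by
      have : (∫ t in Icc A (2*A), max (x + t) 0 * μb t)
          = ∫ t in Icc A (2*A), (x * μb t + t * μb t) := by
        apply setIntegral_congr_fun measurableSet_Icc
        intro t ht
        show max (x + t) 0 * μb t = x * μb t + t * μb t
        rw [max_eq_left (by linarith [ht.1] : (0:ℝ) ≤ x + t)]
        ring
      have hi1 : IntegrableOn (fun t => x * μb t) (Icc A (2*A)) volume :=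
        (continuous_const.mul hμc).integrableOn_Icc
      have hi2 : IntegrableOn (fun t : ℝ => t * μb t) (Icc A (2*A)) volume :=
        (continuous_id.mul hμc).integrableOn_Icc
      rw [this, integral_add hi1 hi2, integral_const_mul]
    have htail2 : (∫ t in Icc A (2*A), max (-x + t) 0 * μb t) = -x * I0 + I1 := by
      have : (∫ t in Icc A (2*A), max (-x + t) 0 * μb t)
          = ∫ t in Icc A (2*A), (-x * μb t + t * μb t) := by
        apply setIntegral_congr_fun measurableSet_Icc
        intro t ht
        show max (-x + t) 0 * μb t = -x * μb t + t * μb t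
        rw [max_eq_left (by linarith [ht.1] : (0:ℝ) ≤ -x + t)]
        ring
      have hi1 : IntegrableOn (fun t => -x * μb t) (Icc A (2*A)) volume :=
        (continuous_const.mul hμc).integrableOn_Icc
      have hi2 : IntegrableOn (fun t : ℝ => t * μb t) (Icc A (2*A)) volume :=
        (continuous_id.mul hμc).integrableOn_Icc
      rw [this, integral_add hi1 hi2, integral_const_mul]
    -- evaluate head integrals
    have hhead1 : (∫ t in (0:ℝ)..A, g1 t * max (x + t) 0)
        = 2 * ∫ t in (0:ℝ)..A, deriv (deriv f) (-t) * max (x + t) 0 := by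
      rw [← intervalIntegral.integral_const_mul]
      apply intervalIntegral.integral_congr
      intro t _
      simp only [hg1_def]; ring
    have hhead2 : (∫ t in (0:ℝ)..A, g2 t * max (-x + t) 0)
        = 2 * ∫ t in (0:ℝ)..A, deriv (deriv f) t * max (t - x) 0 := by
      rw [← intervalIntegral.integral_const_mul]
      apply intervalIntegral.integral_congr
      intro t _
      simp only [hg2_def, neg_add_eq_sub]; ring
    rw [hint1, hint2, htail1, htail2, hhead1, hhead2]
    have hkey := key_identity f hd1 hd2 hf2 A x hx1 hx2
    rw [← hα_def, ← hβ_def] at hkey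
    have hI0ne : I0 ≠ 0 := ne_of_gt hI0pos
    have hI1ne : I1 ≠ 0 := ne_of_gt hI1pos
    have hlin : cp * (x * I0 + I1) + cm * (-x * I0 + I1) = 2 * (β * x + α) := by
      rw [hcp_def, hcm_def]
      field_simp
      ring
    linear_combination hkey + (1/2) * hlin
end
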